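/- Let C be a HOPT in which the tensor product preserves equivalence of double duals, and let S be a class of objects of C such that d_A is an isomorphism for every A ∈ S. Let G(S) be the smallest class of objects containing S and closed under the operations X, Y ∈ G(S) ⟹ X ⊗ Y ∈ G(S) and X, Y ∈ G(S) ⟹ (X ⇒ Y) ∈ G(S). Then d_X is an isomorphism for every X ∈ G(S). In particular, if (C, C₁) is a tight HOPT (the objects of C are generated from those of C₁ by ⊗ and ⇒), d_A is an isomorphism for every object A of C₁, and ⊗ preserves equivalence of double duals, then d_X is an isomorphism for every object X of C, i.e. C is *-autonomous with dualising object I. -/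

import Mathlib

open CategoryTheory MonoidalCategory

universe v u

/-- A higher order process theory (HOPT): a symmetric monoidal category equipped with
internal-hom objects `hom A B` (written `A ⇒ B`), evaluation (insertion) morphisms
`ε_{A,B} : (A ⇒ B) ⊗ A ⟶ B`, and, for every `f : X ⊗ A ⟶ B`, a unique currying
`f̄ : X ⟶ (A ⇒ B)` with `(f̄ ⊗ 𝟙 A) ≫ ε_{A,B} = f`. -/
structure HOPT (C : Type u) [Category.{v} C] [MonoidalCategory C] [SymmetricCategory C] where
  hom : C → C → C
  ev : ∀ A B : C, hom A B ⊗ A ⟶ B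
  curry : ∀ {X A B : C}, (X ⊗ A ⟶ B) → (X ⟶ hom A B)
  curry_ev : ∀ {X A B : C} (f : X ⊗ A ⟶ B), (curry f ⊗ₘ 𝟙 A) ≫ ev A B = f
  curry_unique : ∀ {X A B : C} {f : X ⊗ A ⟶ B} {g : X ⟶ hom A B},
    (g ⊗ₘ 𝟙 A) ≫ ev A B = f → g = curry f

namespace HOPT

variable {C : Type u} [Category.{v} C] [MonoidalCategory C] [SymmetricCategory C] (H : HOPT C)

/-- The dualising process `d_A : A ⟶ ((A ⇒ I) ⇒ I)`, i.e. the unique morphism with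
`(d_A ⊗ 𝟙) ≫ ε_{A⇒I,I} = β_{A,A⇒I} ≫ ε_{A,I}`. -/
def dual (A : C) : A ⟶ H.hom (H.hom A (𝟙_ C)) (𝟙_ C) :=
  H.curry ((β_ A (H.hom A (𝟙_ C))).hom ≫ H.ev A (𝟙_ C))

/-- Double evaluation `((A ⇒ B) ⊗ (B ⇒ D)) ⊗ A ⟶ D`: after rearranging by associators and
braidings, evaluate the `(A ⇒ B)`-factor on the `A`-factor via `ε_{A,B}`, then evaluate the
`(B ⇒ D)`-factor on the result via `ε_{B,D}`. -/
def doubleEval (A B D : C) : (H.hom A B ⊗ H.hom B D) ⊗ A ⟶ D :=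
  (α_ _ _ _).hom ≫ (𝟙 (H.hom A B) ⊗ₘ (β_ (H.hom B D) A).hom) ≫ (α_ _ _ _).inv ≫
    (H.ev A B ⊗ₘ 𝟙 (H.hom B D)) ≫ (β_ B (H.hom B D)).hom ≫ H.ev B D

/-- The lifting process `T_{A,B} : (A ⇒ B) ⟶ ((B ⇒ I) ⇒ (A ⇒ I))`, i.e. the unique morphism
whose double uncurrying is the double evaluation `doubleEval A B I`. -/
def lift (A B : C) : H.hom A B ⟶ H.hom (H.hom B (𝟙_ C)) (H.hom A (𝟙_ C)) :=
  H.curry (H.curry (H.doubleEval A B (𝟙_ C)))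

/-- The static currying `φ : (X ⇒ (A ⇒ B)) ⟶ ((X ⊗ A) ⇒ B)`, i.e. the unique morphism whose
uncurrying reassociates, evaluates the `(X ⇒ (A ⇒ B))`-factor on the `X`-factor via
`ε_{X,A⇒B}`, and then evaluates the result on the `A`-factor via `ε_{A,B}`. -/
def staticCurry (X A B : C) : H.hom X (H.hom A B) ⟶ H.hom (X ⊗ A) B :=
  H.curry ((α_ (H.hom X (H.hom A B)) X A).inv ≫ (H.ev X (H.hom A B) ⊗ₘ 𝟙 A) ≫ H.ev A B)

end HOPT

/-- A process theory is deterministic if it has exactly one scalar. -/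
def Deterministic (C : Type u) [Category.{v} C] [MonoidalCategory C] : Prop :=
  ∀ s t : 𝟙_ C ⟶ 𝟙_ C, s = t

/-- An object is causal if it has exactly one effect. -/
def Causal {C : Type u} [Category.{v} C] [MonoidalCategory C] (A : C) : Prop :=
  ∃! _e : A ⟶ 𝟙_ C, True

/-- A theory has no correlations with single-state objects if every joint state with a
single-state object is a product state. -/
def NoCorrelations (C : Type u) [Category.{v} C] [MonoidalCategory C] : Prop :=
  ∀ Y : C, (∃! _π : 𝟙_ C ⟶ Y, True) →
    ∀ (X : C) (ρ : 𝟙_ C ⟶ X ⊗ Y), ∃ (ρ' : 𝟙_ C ⟶ X) (π : 𝟙_ C ⟶ Y),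
      ρ = (λ_ (𝟙_ C)).inv ≫ (ρ' ⊗ₘ π)

/-- The smallest class of objects containing `S` and closed under `⊗` and `⇒`. -/
inductive GeneratedBy {C : Type u} [Category.{v} C] [MonoidalCategory C] [SymmetricCategory C]
    (H : HOPT C) (S : Set C) : C → Prop
  | base {A : C} : A ∈ S → GeneratedBy H S A
  | tensor {X Y : C} : GeneratedBy H S X → GeneratedBy H S Y → GeneratedBy H S (X ⊗ Y)
  | hom {X Y : C} : GeneratedBy H S X → GeneratedBy H S Y → GeneratedBy H S (H.hom X Y)

/-! The dualising process is natural, so invertibility of `d_X` is invariant under isomorphism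
of `X`, and the triple-dual identity `d_{A ⇒ I} ≫ (d_A ⇒ I) = 𝟙` shows that `d_{A ⇒ I}` is
invertible whenever `d_A` is. If `d_Y` is invertible, then
`X ⇒ Y ≅ X ⇒ ((Y ⇒ I) ⇒ I) ≅ (X ⊗ (Y ⇒ I)) ⇒ I`, so invertibility of `d` passes to `X ⇒ Y`
from `X` and `Y` because `⊗` preserves it; induction over the generation of `G(S)` concludes. -/

namespace HOPT

variable {C : Type u} [Category.{v} C] [MonoidalCategory C] [SymmetricCategory C] (H : HOPT C)

@[simp]
lemma curry_whiskerRight_ev {X A B : C} (f : X ⊗ A ⟶ B) : H.curry f ▷ A ≫ H.ev A B = f := by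
  simpa only [tensorHom_id] using H.curry_ev f

lemma hom_ext {X A B : C} {g g' : X ⟶ H.hom A B}
    (h : g ▷ A ≫ H.ev A B = g' ▷ A ≫ H.ev A B) : g = g' :=
  (H.curry_unique (f := g' ▷ A ≫ H.ev A B) (by rwa [tensorHom_id])).trans
    (H.curry_unique (by rw [tensorHom_id])).symm

def precomp {A B : C} (f : A ⟶ B) (D : C) : H.hom B D ⟶ H.hom A D :=
  H.curry (H.hom B D ◁ f ≫ H.ev B D)

@[simp]
lemma precomp_whiskerRight_ev {A B : C} (f : A ⟶ B) (D : C) :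
    H.precomp f D ▷ A ≫ H.ev A D = H.hom B D ◁ f ≫ H.ev B D :=
  H.curry_whiskerRight_ev _

lemma precomp_id (A D : C) : H.precomp (𝟙 A) D = 𝟙 _ :=
  H.hom_ext (by simp)

lemma precomp_comp {A B E : C} (f : A ⟶ B) (g : B ⟶ E) (D : C) :
    H.precomp (f ≫ g) D = H.precomp g D ≫ H.precomp f D :=
  H.hom_ext (by simp [← whisker_exchange_assoc])

instance isIso_precomp {A B : C} (f : A ⟶ B) [IsIso f] (D : C) : IsIso (H.precomp f D) :=
  ⟨H.precomp (inv f) D, by simp [← precomp_comp, precomp_id],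
    by simp [← precomp_comp, precomp_id]⟩

def postcomp (A : C) {B B' : C} (g : B ⟶ B') : H.hom A B ⟶ H.hom A B' :=
  H.curry (H.ev A B ≫ g)

@[simp]
lemma postcomp_whiskerRight_ev (A : C) {B B' : C} (g : B ⟶ B') :
    H.postcomp A g ▷ A ≫ H.ev A B' = H.ev A B ≫ g :=
  H.curry_whiskerRight_ev _

lemma postcomp_id (A B : C) : H.postcomp A (𝟙 B) = 𝟙 _ :=
  H.hom_ext (by simp)

lemma postcomp_comp (A : C) {B B' B'' : C} (g : B ⟶ B') (g' : B' ⟶ B'') :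
    H.postcomp A (g ≫ g') = H.postcomp A g ≫ H.postcomp A g' :=
  H.hom_ext (by
    simp only [comp_whiskerRight, Category.assoc, postcomp_whiskerRight_ev]
    simp only [← Category.assoc, postcomp_whiskerRight_ev])

instance isIso_postcomp (A : C) {B B' : C} (g : B ⟶ B') [IsIso g] : IsIso (H.postcomp A g) :=
  ⟨H.postcomp A (inv g), by simp [← postcomp_comp, postcomp_id],
    by simp [← postcomp_comp, postcomp_id]⟩

@[simp]
lemma dual_whiskerRight_ev (A : C) :
    H.dual A ▷ H.hom A (𝟙_ C) ≫ H.ev (H.hom A (𝟙_ C)) (𝟙_ C) =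
      (β_ A (H.hom A (𝟙_ C))).hom ≫ H.ev A (𝟙_ C) :=
  H.curry_whiskerRight_ev _

lemma dual_naturality {W V : C} (f : W ⟶ V) :
    H.dual W ≫ H.precomp (H.precomp f (𝟙_ C)) (𝟙_ C) = f ≫ H.dual V :=
  H.hom_ext (by simp [← whisker_exchange_assoc])

lemma dual_comp_precomp_dual (A : C) :
    H.dual (H.hom A (𝟙_ C)) ≫ H.precomp (H.dual A) (𝟙_ C) = 𝟙 _ :=
  H.hom_ext (by simp [← whisker_exchange_assoc])

def staticUncurry (X A B : C) : H.hom (X ⊗ A) B ⟶ H.hom X (H.hom A B) :=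
  H.curry (H.curry ((α_ _ X A).hom ≫ H.ev (X ⊗ A) B))

@[simp]
lemma staticCurry_whiskerRight_whiskerRight_ev (X A B : C) :
    H.staticCurry X A B ▷ X ▷ A ≫ (α_ _ X A).hom ≫ H.ev (X ⊗ A) B =
      H.ev X (H.hom A B) ▷ A ≫ H.ev A B := by
  rw [associator_naturality_left_assoc, staticCurry, curry_whiskerRight_ev, tensorHom_id,
    Iso.hom_inv_id_assoc]

@[simp]
lemma staticUncurry_whiskerRight_whiskerRight_ev (X A B : C) :
    H.staticUncurry X A B ▷ X ▷ A ≫ H.ev X (H.hom A B) ▷ A ≫ H.ev A B =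
      (α_ _ X A).hom ≫ H.ev (X ⊗ A) B := by
  rw [← comp_whiskerRight_assoc, staticUncurry, curry_whiskerRight_ev, curry_whiskerRight_ev]

instance isIso_staticCurry (X A B : C) : IsIso (H.staticCurry X A B) :=
  ⟨H.staticUncurry X A B, H.hom_ext (H.hom_ext (by simp)), H.hom_ext (by simp)⟩

instance isIso_dual_hom_unit (A : C) [IsIso (H.dual A)] :
    IsIso (H.dual (H.hom A (𝟙_ C))) := by
  rw [IsIso.eq_inv_of_inv_hom_id (H.dual_comp_precomp_dual A)]
  infer_instance

lemma isIso_dual_of_iso {W V : C} (e : W ≅ V) [IsIso (H.dual V)] : IsIso (H.dual W) := by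
  rw [(IsIso.eq_comp_inv _).2 (H.dual_naturality e.hom)]
  infer_instance

lemma isIso_dual_hom (X Y : C) [IsIso (H.dual Y)] [IsIso (H.dual (X ⊗ H.hom Y (𝟙_ C)))] :
    IsIso (H.dual (H.hom X Y)) :=
  H.isIso_dual_of_iso (asIso (H.postcomp X (H.dual Y) ≫ H.staticCurry X _ _))

end HOPT

/-- if `⊗` preserves equivalence of double duals and `d_A` is an isomorphism for
every `A ∈ S`, then `d_X` is an isomorphism for every `X` generated from `S` by `⊗` and `⇒`;
in particular, in a tight HOPT where every object is so generated from objects with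
invertible dualisers, every dualiser is invertible, i.e. the theory is `*`-autonomous with
dualising object `I`. -/
theorem stmt19 {C : Type u} [Category.{v} C] [MonoidalCategory C] [SymmetricCategory C]
    (H : HOPT C)
    (htens : ∀ A B : C, IsIso (H.dual A) → IsIso (H.dual B) → IsIso (H.dual (A ⊗ B)))
    (S : Set C) (hS : ∀ A ∈ S, IsIso (H.dual A)) :
    (∀ X : C, GeneratedBy H S X → IsIso (H.dual X)) ∧
    ((∀ X : C, GeneratedBy H S X) → ∀ X : C, IsIso (H.dual X)) := by
  have isIso_of_generatedBy (X : C) (hX : GeneratedBy H S X) : IsIso (H.dual X) := by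
    induction hX with
    | base hA => exact hS _ hA
    | tensor _ _ ihX ihY => exact htens _ _ ihX ihY
    | @hom X Y _ _ ihX ihY =>
      have := htens X _ ihX (H.isIso_dual_hom_unit Y)
      exact H.isIso_dual_hom X Y
  exact ⟨isIso_of_generatedBy, fun hall X => isIso_of_generatedBy X (hall X)⟩
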